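/- Let J be a closed ideal with the compact spectral property of a unital C*-algebra, and let j ∈ J \ {0}. Then j*j is a norm limit of finite linear combinations of minimal projections in J. -/

import Mathlib

/-!
For a self-adjoint `a ∈ J`, the compact spectral property makes every nonzero point `t` of the
spectrum isolated, and only finitely many of them satisfy `|t| ≥ δ`; so `a` lies within `δ` of
`∑ t • pₜ`, where the spectral projections `pₜ` lie in `J` because `t ≠ 0`. Every projection of `J`
is a finite sum of minimal ones: otherwise splitting off subprojections produces a strictly
decreasing chain `uₙ` of projections in `J`, whose differences `dₙ` are nonzero orthogonal
projections under `u₀`, and then `u₀ - ∑ 2⁻⁽ⁿ⁺¹⁾ dₙ ∈ J` has the eigenvalues `1 - 2⁻⁽ⁿ⁺¹⁾`,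
which accumulate at `1`.
-/

open Filter Topology

/-- The compact spectral property for an ideal of a unital C*-algebra. -/
def CompactSpectralProperty {A : Type*} [CStarAlgebra A] (J : TwoSidedIdeal A) : Prop :=
  ∀ a ∈ J, IsSelfAdjoint a → ∀ μ : ℂ, μ ≠ 0 → ¬ AccPt μ (Filter.principal (spectrum ℂ a))

/-- `p` is a minimal projection in the ideal `J`. -/
def IsMinimalProjection {A : Type*} [CStarAlgebra A] (J : TwoSidedIdeal A) (p : A) : Prop :=
  p ∈ J ∧ star p = p ∧ p * p = p ∧ p ≠ 0 ∧
    ∀ r ∈ J, star r = r → r * r = r → r * p = r → p * r = r → r ≠ 0 → r = p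


lemma mem_spectrum_of_mul_eq_smul {R A : Type*} [CommRing R] [Ring A] [Algebra R A]
    {a d : A} {c : R} (hd : d ≠ 0) (h : a * d = c • d) : c ∈ spectrum R a := by
  intro hunit
  apply hd
  rw [← hunit.mul_right_eq_zero, sub_mul, h, Algebra.algebraMap_eq_smul_one, smul_one_mul,
    sub_self]

lemma Summable.tsum_smul_mul_of_pairwise_mul_eq_zero {ι R A : Type*} [Ring A] [TopologicalSpace A]
    [IsTopologicalRing A] [T2Space A] [Semiring R] [Module R A] [IsScalarTower R A A]
    {c : ι → R} {d : ι → A} (hsum : Summable fun i => c i • d i)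
    (hd : ∀ i, IsIdempotentElem (d i)) (horth : Pairwise fun i j => d i * d j = 0) (j : ι) :
    (∑' i, c i • d i) * d j = c j • d j := by
  rw [← hsum.tsum_mul_right, tsum_eq_single j fun i hij => by
    rw [smul_mul_assoc, horth hij, smul_zero], smul_mul_assoc, (hd j).eq]

lemma accPt_of_tendsto_of_ne {X : Type*} [TopologicalSpace X] {S : Set X} {x : ℕ → X} {L : X}
    (hx : Tendsto x atTop (𝓝 L)) (hne : ∀ n, x n ≠ L) (hS : ∀ n, x n ∈ S) : AccPt L (𝓟 S) :=
  accPt_iff_frequently.mpr <| hx.frequently <| Frequently.of_forall fun n => ⟨hne n, hS n⟩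

lemma IsCompact.finite_of_isolated {X : Type*} [TopologicalSpace X] {K : Set X}
    (hK : IsCompact K) (h : ∀ x ∈ K, ∀ᶠ y in 𝓝 x, y ∈ K → y = x) : K.Finite := by
  by_contra hinf
  obtain ⟨x, hxK, hx⟩ := Set.Infinite.exists_accPt_of_subset_isCompact hinf hK subset_rfl
  obtain ⟨y, hyx, hne, hyK⟩ := ((h x hxK).and_frequently (accPt_iff_frequently.mp hx)).exists
  exact hne (hyx hyK)

lemma continuousOn_ite_eq_of_isolated {X Y : Type*} [TopologicalSpace X] [T1Space X] [DecidableEq X]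
    [TopologicalSpace Y] {S : Set X} {t : X} (ht : ∀ᶠ s in 𝓝 t, s ∈ S → s = t) (b c : Y) :
    ContinuousOn (fun s => if s = t then b else c) S := by
  intro x _
  refine tendsto_nhds_of_eventually_eq ?_
  by_cases hxt : x = t
  · subst hxt
    filter_upwards [eventually_nhdsWithin_iff.mpr ht] with s hs
    simp [hs]
  · filter_upwards [nhdsWithin_le_nhds (eventually_ne_nhds hxt)] with s hs
    simp [hs, hxt]

lemma IsStarProjection.mul_sub_succ_of_antitone {A : Type*} [NonUnitalCStarAlgebra A]
    [PartialOrder A] [StarOrderedRing A] {u : ℕ → A} (hu : ∀ n, IsStarProjection (u n))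
    (hanti : Antitone u) {m n : ℕ} (hmn : m ≤ n) :
    u m * (u n - u (n + 1)) = u n - u (n + 1) := by
  have hle : ∀ k, m ≤ k → u m * u k = u k := fun k hk =>
    ((hu k).le_iff_mul_eq_right (hu m)).mp (hanti hk)
  rw [mul_sub, hle n hmn, hle (n + 1) (hmn.trans n.le_succ)]

lemma IsStarProjection.pairwise_sub_succ_mul_eq_zero_of_antitone {A : Type*}
    [NonUnitalCStarAlgebra A] [PartialOrder A] [StarOrderedRing A] {u : ℕ → A}
    (hu : ∀ n, IsStarProjection (u n)) (hanti : Antitone u) :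
    Pairwise fun m n => (u m - u (m + 1)) * (u n - u (n + 1)) = 0 := by
  have hlt : ∀ {m n}, m < n → (u m - u (m + 1)) * (u n - u (n + 1)) = 0 := fun hmn => by
    rw [sub_mul, mul_sub_succ_of_antitone hu hanti hmn.le, mul_sub_succ_of_antitone hu hanti hmn,
      sub_self]
  have hsa : ∀ n, IsSelfAdjoint (u n - u (n + 1)) := fun n =>
    (hu n).isSelfAdjoint.sub (hu (n + 1)).isSelfAdjoint
  intro m n hmn
  rcases hmn.lt_or_gt with h | h
  · exact hlt h
  · rw [← (hsa m).star_eq, ← (hsa n).star_eq, ← star_mul, hlt h, star_zero]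

lemma exists_lt_of_not_isMinimalProjection {A : Type*} [CStarAlgebra A] [PartialOrder A]
    [StarOrderedRing A] {J : TwoSidedIdeal A} {p : A} (hp : p ∈ J) (hpp : IsStarProjection p)
    (hp0 : p ≠ 0) (hmin : ¬ IsMinimalProjection J p) :
    ∃ r ∈ J, IsStarProjection r ∧ r ≠ 0 ∧ r < p := by
  obtain ⟨r, hr, hrs, hri, hrp, -, hr0, hne⟩ : ∃ r ∈ J, star r = r ∧ r * r = r ∧ r * p = r ∧
      p * r = r ∧ r ≠ 0 ∧ r ≠ p := by
    by_contra! h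
    exact hmin ⟨hp, hpp.isSelfAdjoint, hpp.isIdempotentElem, hp0, h⟩
  have hrpr : IsStarProjection r := ⟨hri, hrs⟩
  exact ⟨r, hr, hrpr, hr0, lt_of_le_of_ne ((hrpr.le_iff_mul_eq_left hpp).mpr hrp) hne⟩

-- `cfc` returns `0` when `t` is a non-isolated point of the spectrum or `a` is not self-adjoint,
-- so this is always a projection.
noncomputable def spectralProjection {A : Type*} [CStarAlgebra A] (a : A) (t : ℝ) : A :=
  cfc (fun s : ℝ => if s = t then (1 : ℝ) else 0) a

section CStarAlgebra

variable {A : Type*} [CStarAlgebra A] {J : TwoSidedIdeal A} {a : A}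

lemma isStarProjection_spectralProjection (a : A) (t : ℝ) :
    IsStarProjection (spectralProjection a t) := by
  refine ⟨?_, cfc_predicate _ a⟩
  by_cases hcont : ContinuousOn (fun s : ℝ => if s = t then (1 : ℝ) else 0) (spectrum ℝ a)
  · rw [IsIdempotentElem, spectralProjection, ← cfc_mul _ _ a hcont hcont]
    exact cfc_congr fun s _ => by split_ifs <;> norm_num
  · rw [spectralProjection, cfc_apply_of_not_continuousOn a hcont]
    exact .zero

lemma spectralProjection_mem (ha : a ∈ J) {t : ℝ} (ht : t ≠ 0) : spectralProjection a t ∈ J := by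
  set f : ℝ → ℝ := fun s => if s = t then 1 else 0
  by_cases h : IsSelfAdjoint a ∧ ContinuousOn f (spectrum ℝ a)
  · obtain ⟨hsa, hcont⟩ := h
    have hfactor : spectralProjection a t = a * cfc (fun s => t⁻¹ * f s) a := calc
      spectralProjection a t = cfc (fun s => s * (t⁻¹ * f s)) a :=
        cfc_congr fun s _ => by by_cases hst : s = t <;> simp [f, hst, ht]
      _ = a * cfc (fun s => t⁻¹ * f s) a := by rw [cfc_mul (fun s => s) _ a, cfc_id' ℝ a]
    rw [hfactor]
    exact J.mul_mem_right _ _ ha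
  · rw [spectralProjection, cfc_apply_of_not_and a h]
    exact J.zero_mem

lemma norm_sub_sum_smul_spectralProjection_le (hsa : IsSelfAdjoint a) {δ : ℝ} (hδ : 0 ≤ δ)
    {F : Finset ℝ} (hF : ∀ s ∈ spectrum ℝ a, s ∉ F → |s| ≤ δ)
    (hcont : ∀ t ∈ F, ContinuousOn (fun s : ℝ => if s = t then (1 : ℝ) else 0) (spectrum ℝ a)) :
    ‖a - ∑ t ∈ F, t • spectralProjection a t‖ ≤ δ := by
  set g : ℝ → ℝ := fun s => ∑ t ∈ F, t * if s = t then 1 else 0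
  have hgcont : ContinuousOn g (spectrum ℝ a) :=
    continuousOn_finsetSum F fun t ht => continuousOn_const.mul (hcont t ht)
  have hg : ∑ t ∈ F, t • spectralProjection a t = cfc g a := by
    rw [show g = ∑ t ∈ F, fun s => t * if s = t then 1 else 0 from (Finset.sum_fn ..).symm,
      cfc_sum (fun t s => t * if s = t then (1 : ℝ) else 0) a F
        fun t ht => continuousOn_const.mul (hcont t ht)]
    exact Finset.sum_congr rfl fun t ht => (cfc_const_mul t _ a (hcont t ht)).symm
  have hg_apply : ∀ s, g s = if s ∈ F then s else 0 := fun s => by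
    simp [g, mul_ite, Finset.sum_ite_eq]
  have hdiff : a - cfc g a = cfc (fun s => s - g s) a := by
    rw [cfc_sub (fun s => s) g a continuousOn_id hgcont, cfc_id' ℝ a]
  rw [hg, hdiff]
  refine norm_cfc_le hδ fun s hs => ?_
  by_cases hsF : s ∈ F
  · simpa [hg_apply, hsF] using hδ
  · simpa [hg_apply, hsF] using hF s hs hsF

end CStarAlgebra

namespace CompactSpectralProperty

variable {A : Type*} [CStarAlgebra A] {J : TwoSidedIdeal A} {a : A}

lemma eventually_eq_of_mem_spectrum (hJ : CompactSpectralProperty J) (ha : a ∈ J)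
    (hsa : IsSelfAdjoint a) {t : ℝ} (ht : t ≠ 0) : ∀ᶠ s in 𝓝 t, s ∈ spectrum ℝ a → s = t := by
  have hiso := hJ a ha hsa t (Complex.ofReal_ne_zero.mpr ht)
  rw [accPt_iff_frequently, not_frequently] at hiso
  filter_upwards [Complex.continuous_ofReal.tendsto t |>.eventually hiso] with s hs hsσ
  by_contra hst
  exact hs ⟨Complex.ofReal_injective.ne hst, spectrum.algebraMap_mem ℂ hsσ⟩

lemma finite_spectrum_abs_ge (hJ : CompactSpectralProperty J) (ha : a ∈ J)
    (hsa : IsSelfAdjoint a) {δ : ℝ} (hδ : 0 < δ) : {s ∈ spectrum ℝ a | δ ≤ |s|}.Finite := by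
  refine IsCompact.finite_of_isolated
    ((spectrum.isCompact a).inter_right (isClosed_le continuous_const continuous_abs))
    fun t ht => ?_
  have ht0 : t ≠ 0 := by rintro rfl; simp at ht; linarith [ht.2]
  filter_upwards [hJ.eventually_eq_of_mem_spectrum ha hsa ht0] with s hs hsF using hs hsF.1

lemma not_pairwise_mul_eq_zero (hJc : IsClosed (J : Set A)) (hJ : CompactSpectralProperty J)
    {q : A} (hq : q ∈ J) (hqs : IsSelfAdjoint q) {d : ℕ → A} (hd : ∀ n, d n ∈ J)
    (hdp : ∀ n, IsStarProjection (d n)) (hd0 : ∀ n, d n ≠ 0) (hqd : ∀ n, q * d n = d n) :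
    ¬ Pairwise fun m n => d m * d n = 0 := by
  intro horth
  -- `y` acts on `d n` as the scalar `1 - 2⁻¹ ^ (n + 1)`, so its spectrum accumulates at `1`.
  set c : ℕ → ℝ := fun n => 2⁻¹ ^ (n + 1)
  have hc : Summable c :=
    (summable_nat_add_iff 1).mpr (summable_geometric_of_lt_one (by norm_num) (by norm_num))
  have hsum : Summable fun n => c n • d n := by
    refine hc.of_norm_bounded fun n => (norm_smul_le _ _).trans ?_
    rw [Real.norm_of_nonneg (by positivity)]
    exact mul_le_of_le_one_right (by positivity) ((hdp n).norm_le (d n))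
  set y := q - ∑' n, c n • d n
  have hyJ : y ∈ J := J.sub_mem hq <| tsum_mem hJc fun n => by
    rw [← smul_one_mul]
    exact J.mul_mem_left _ _ (hd n)
  have hys : IsSelfAdjoint y := hqs.sub <| by
    rw [IsSelfAdjoint, tsum_star]
    exact congrArg tsum (funext fun n => ((IsSelfAdjoint.all (c n)).smul (hdp n).isSelfAdjoint))
  have hyd : ∀ n, y * d n = ((1 - c n : ℝ) : ℂ) • d n := fun n => by
    rw [sub_mul, hqd, hsum.tsum_smul_mul_of_pairwise_mul_eq_zero
      (fun n => (hdp n).isIdempotentElem) horth, Complex.coe_smul, sub_smul, one_smul]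
  have hlim : Tendsto (fun n => ((1 - c n : ℝ) : ℂ)) atTop (𝓝 1) := by
    refine (Complex.continuous_ofReal.tendsto' 1 1 Complex.ofReal_one).comp ?_
    simpa [c] using (tendsto_const_nhds (x := (1 : ℝ))).sub ((tendsto_pow_atTop_nhds_zero_of_lt_one
      (by norm_num : (0 : ℝ) ≤ 2⁻¹) (by norm_num)).comp (tendsto_add_atTop_nat 1))
  refine hJ y hyJ hys 1 one_ne_zero (accPt_of_tendsto_of_ne hlim (fun n => ?_)
    fun n => mem_spectrum_of_mul_eq_smul (hd0 n) (hyd n))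
  exact_mod_cast (show (1 - c n : ℝ) ≠ 1 by simp [c])

lemma isWF_projections [PartialOrder A] [StarOrderedRing A] (hJc : IsClosed (J : Set A))
    (hJ : CompactSpectralProperty J) : {p : A | p ∈ J ∧ IsStarProjection p}.IsWF := by
  rw [Set.isWF_iff_no_descending_seq]
  intro u hu hmem
  have hproj n : IsStarProjection (u n) := (hmem n).2
  exact hJ.not_pairwise_mul_eq_zero hJc (hmem 0).1 (hproj 0).isSelfAdjoint
    (fun n => J.sub_mem (hmem n).1 (hmem (n + 1)).1)
    (fun n => ((hproj (n + 1)).le_iff_sub (hproj n)).mp (hu.antitone n.le_succ))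
    (fun n => sub_ne_zero.mpr (hu n.lt_succ_self).ne')
    (fun n => IsStarProjection.mul_sub_succ_of_antitone hproj hu.antitone n.zero_le)
    (IsStarProjection.pairwise_sub_succ_mul_eq_zero_of_antitone hproj hu.antitone)

lemma mem_span_of_isStarProjection (hJc : IsClosed (J : Set A)) (hJ : CompactSpectralProperty J)
    {p : A} (hp : p ∈ J) (hpp : IsStarProjection p) :
    p ∈ Submodule.span ℂ {p | IsMinimalProjection J p} := by
  let _ := CStarAlgebra.spectralOrder A
  have _ := CStarAlgebra.spectralOrderedRing A
  refine (hJ.isWF_projections hJc).induction ⟨hp, hpp⟩ fun q ⟨hq, hqp⟩ ih => ?_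
  by_cases hq0 : q = 0
  · exact hq0 ▸ zero_mem _
  by_cases hmin : IsMinimalProjection J q
  · exact Submodule.subset_span hmin
  obtain ⟨r, hr, hrp, hr0, hrq⟩ := exists_lt_of_not_isMinimalProjection hq hqp hq0 hmin
  have hqr : IsStarProjection (q - r) := (hrp.le_iff_sub hqp).mp hrq.le
  rw [← add_sub_cancel r q]
  exact add_mem (ih r ⟨hr, hrp⟩ hrq) (ih (q - r) ⟨J.sub_mem hq hr, hqr⟩
    (sub_lt_self q (lt_of_le_of_ne hrp.nonneg (Ne.symm hr0))))

lemma mem_closure_span_of_isSelfAdjoint (hJc : IsClosed (J : Set A))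
    (hJ : CompactSpectralProperty J) (ha : a ∈ J) (hsa : IsSelfAdjoint a) :
    a ∈ closure (Submodule.span ℂ {p | IsMinimalProjection J p} : Set A) := by
  set S := Submodule.span ℂ {p | IsMinimalProjection J p}
  refine Metric.mem_closure_iff.mpr fun ε hε => ?_
  have hfin := hJ.finite_spectrum_abs_ge ha hsa (half_pos hε)
  set F := hfin.toFinset
  have hF0 : ∀ t ∈ F, t ≠ 0 := fun t ht h => by
    simp [F, h] at ht
    linarith [ht.2]
  have hsmall : ∀ s ∈ spectrum ℝ a, s ∉ F → |s| ≤ ε / 2 := fun s hs hsF => by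
    simp only [F, Set.Finite.mem_toFinset, Set.mem_ofPred_eq, not_and, not_le] at hsF
    exact (hsF hs).le
  have hspan : ∑ t ∈ F, t • spectralProjection a t ∈ S :=
    Submodule.sum_mem _ fun t ht => Submodule.smul_of_tower_mem _ t <|
      hJ.mem_span_of_isStarProjection hJc (spectralProjection_mem ha (hF0 t ht))
        (isStarProjection_spectralProjection a t)
  have hnorm := norm_sub_sum_smul_spectralProjection_le hsa (half_pos hε).le hsmall fun t ht =>
    continuousOn_ite_eq_of_isolated (hJ.eventually_eq_of_mem_spectrum ha hsa (hF0 t ht)) _ _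
  exact ⟨_, hspan, by rw [dist_eq_norm]; linarith⟩

end CompactSpectralProperty

theorem star_mul_self_mem_closure_span_minimal_projections_general {A : Type*} [CStarAlgebra A]
    (J : TwoSidedIdeal A) (hJc : IsClosed (J : Set A))
    (hJ : CompactSpectralProperty J)
    (j : A) (hj : j ∈ J) :
    star j * j ∈ closure (↑(Submodule.span ℂ {p : A | IsMinimalProjection J p}) : Set A) :=
  hJ.mem_closure_span_of_isSelfAdjoint hJc (J.mul_mem_left _ _ hj) (.star_mul_self j)

/-- If `J` is a closed ideal with the compact spectral property and `j ∈ J` is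
nonzero, then `j* j` is a norm limit of finite linear combinations of minimal
projections in `J`. -/
theorem star_mul_self_mem_closure_span_minimal_projections {A : Type*} [CStarAlgebra A]
    (J : TwoSidedIdeal A) (hJc : IsClosed (J : Set A))
    (hJ : CompactSpectralProperty J)
    (j : A) (hj : j ∈ J) (hj0 : j ≠ 0) :
    star j * j ∈ closure (↑(Submodule.span ℂ {p : A | IsMinimalProjection J p}) : Set A) :=
  star_mul_self_mem_closure_span_minimal_projections_general J hJc hJ j hj
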